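/- Let α ≠ 0 and β ≥ 0 be constants, n a positive integer, and x_t a nonnegative differentiable function satisfying ∂_t x_t ≤ α n x_t + β n² x_t^{1 − 1/n} for t ≥ t_0. Then x_t^{1/n} ≤ x_{t_0}^{1/n} e^{α(t − t_0)} + (βn/α)(e^{α(t − t_0)} − 1) for all t ≥ t_0. -/

import Mathlib

open Real Set Filter
open scoped Topology

/-!
The substitution `y = x ^ p` turns the Bernoulli-type inequality `x' ≤ a x + b x ^ (1 - p)` into
the linear one `y' ≤ p a y + p b`, to which Grönwall's inequality applies. Since `x ^ p` need not be
differentiable where `x` vanishes, we use `y = (x + ε) ^ p` instead: it satisfies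
`y' ≤ p a y + p b + p |a| ε ^ p`, and the bound passes to the limit `ε → 0⁺`. With `a = α n`,
`b = β n²`, `p = 1 / n` this is the claim.
-/

theorem le_gronwallBound_of_deriv_right_le {f f' : ℝ → ℝ} {δ K ε a b : ℝ}
    (hf : ContinuousOn f (Icc a b)) (hf' : ∀ x ∈ Ico a b, HasDerivWithinAt f (f' x) (Ici x) x)
    (ha : f a ≤ δ) (bound : ∀ x ∈ Ico a b, f' x ≤ K * f x + ε) :
    ∀ x ∈ Icc a b, f x ≤ gronwallBound δ K ε (x - a) :=
  le_gronwallBound_of_liminf_deriv_right_le hf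
    (fun x hx _ hr => ((hf' x hx).liminf_right_slope_le hr).mono fun _ hz => by
      rwa [slope_def_field, div_eq_inv_mul] at hz)
    ha bound

theorem continuous_gronwallBound (K x : ℝ) :
    Continuous fun q : ℝ × ℝ => gronwallBound q.1 K q.2 x := by
  unfold gronwallBound
  split_ifs <;> fun_prop

theorem mul_mul_rpow_sub_one_le_of_le {x d a b p ε : ℝ} (hp₀ : 0 ≤ p) (hp₁ : p ≤ 1)
    (hb : 0 ≤ b) (hx : 0 ≤ x) (hε : 0 < ε) (hd : d ≤ a * x + b * x ^ (1 - p)) :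
    d * p * (x + ε) ^ (p - 1) ≤ p * a * (x + ε) ^ p + (p * b + p * |a| * ε ^ p) := by
  have hxε : 0 < x + ε := by linarith
  set q := (x + ε) ^ (p - 1) with hq_def
  have hq : 0 < q := rpow_pos_of_pos hxε _
  have hxq : a * x * q = a * (x + ε) ^ p - a * (ε * q) := by
    rw [hq_def, rpow_sub_one hxε.ne']; field_simp; ring
  have hεq : ε * q ≤ ε ^ p := by
    calc ε * q ≤ ε * ε ^ (p - 1) := by
          gcongr; exact rpow_le_rpow_of_nonpos hε (by linarith) (by linarith)
      _ = ε ^ p := by rw [rpow_sub_one hε.ne']; field_simp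
  have hbq : x ^ (1 - p) * q ≤ 1 := by
    calc x ^ (1 - p) * q ≤ (x + ε) ^ (1 - p) * q := by
          gcongr; linarith
      _ = 1 := by rw [hq_def, ← rpow_add hxε]; simp
  have hdq : d * q ≤ a * (x + ε) ^ p + (b + |a| * ε ^ p) := by
    have haq : -(a * (ε * q)) ≤ |a| * ε ^ p := by
      nlinarith [neg_abs_le a, abs_nonneg a, mul_pos hε hq]
    nlinarith [mul_le_mul_of_nonneg_right hd hq.le, mul_le_mul_of_nonneg_left hbq hb]
  calc d * p * q = p * (d * q) := by ring
    _ ≤ p * (a * (x + ε) ^ p + (b + |a| * ε ^ p)) := by gcongr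
    _ = p * a * (x + ε) ^ p + (p * b + p * |a| * ε ^ p) := by ring

section Bernoulli

variable {x x' : ℝ → ℝ} {a b p t₀ : ℝ}

theorem rpow_add_le_gronwallBound_of_deriv_le {ε : ℝ} (hp₀ : 0 ≤ p) (hp₁ : p ≤ 1) (hb : 0 ≤ b)
    (hε : 0 < ε) (hx : ∀ t ≥ t₀, HasDerivAt x (x' t) t) (hx₀ : ∀ t ≥ t₀, 0 ≤ x t)
    (hineq : ∀ t ≥ t₀, x' t ≤ a * x t + b * x t ^ (1 - p)) :
    ∀ t ≥ t₀, (x t + ε) ^ p ≤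
      gronwallBound ((x t₀ + ε) ^ p) (p * a) (p * b + p * |a| * ε ^ p) (t - t₀) := by
  intro t ht
  have hderiv : ∀ s ≥ t₀, HasDerivAt (fun s => (x s + ε) ^ p)
      (x' s * p * (x s + ε) ^ (p - 1)) s := fun s hs =>
    ((hx s hs).add_const ε).rpow_const (Or.inl (by linarith [hx₀ s hs]))
  exact le_gronwallBound_of_deriv_right_le
    (fun s hs => (hderiv s hs.1).continuousAt.continuousWithinAt)
    (fun s hs => (hderiv s hs.1).hasDerivWithinAt) le_rfl
    (fun s hs => mul_mul_rpow_sub_one_le_of_le hp₀ hp₁ hb (hx₀ s hs.1) hε (hineq s hs.1))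
    t ⟨ht, le_rfl⟩

theorem rpow_le_gronwallBound_of_deriv_le (hp₀ : 0 < p) (hp₁ : p ≤ 1) (hb : 0 ≤ b)
    (hx : ∀ t ≥ t₀, HasDerivAt x (x' t) t) (hx₀ : ∀ t ≥ t₀, 0 ≤ x t)
    (hineq : ∀ t ≥ t₀, x' t ≤ a * x t + b * x t ^ (1 - p)) :
    ∀ t ≥ t₀, x t ^ p ≤ gronwallBound (x t₀ ^ p) (p * a) (p * b) (t - t₀) := by
  intro t ht
  have hlhs : ContinuousAt (fun ε => (x t + ε) ^ p) 0 := by fun_prop (disch := positivity)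
  have hrhs : ContinuousAt (fun ε =>
      gronwallBound ((x t₀ + ε) ^ p) (p * a) (p * b + p * |a| * ε ^ p) (t - t₀)) 0 :=
    (continuous_gronwallBound _ _).continuousAt.comp (f := fun ε =>
      ((x t₀ + ε) ^ p, p * b + p * |a| * ε ^ p)) (by fun_prop (disch := positivity))
  have hreg : ∀ᶠ ε in 𝓝[>] (0 : ℝ), (x t + ε) ^ p ≤
      gronwallBound ((x t₀ + ε) ^ p) (p * a) (p * b + p * |a| * ε ^ p) (t - t₀) :=
    eventually_nhdsWithin_of_forall fun ε hε =>
      rpow_add_le_gronwallBound_of_deriv_le hp₀.le hp₁ hb hε hx hx₀ hineq t ht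
  have := le_of_tendsto_of_tendsto (hlhs.tendsto.mono_left nhdsWithin_le_nhds)
    (hrhs.tendsto.mono_left nhdsWithin_le_nhds) hreg
  simpa [zero_rpow hp₀.ne'] using this

end Bernoulli

/-- Power-type Grönwall inequality (Proposition C.1). -/
theorem gronwall_power (α β : ℝ) (hα : α ≠ 0) (hβ : 0 ≤ β) (n : ℕ) (hn : 0 < n)
    (t₀ : ℝ) (x : ℝ → ℝ) (hx : Differentiable ℝ x) (hxpos : ∀ t, 0 ≤ x t)
    (hineq : ∀ t ≥ t₀, deriv x t ≤ α * n * x t + β * n ^ 2 * x t ^ (1 - 1 / (n : ℝ))) :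
    ∀ t ≥ t₀, x t ^ (1 / (n : ℝ)) ≤
      x t₀ ^ (1 / (n : ℝ)) * Real.exp (α * (t - t₀)) +
        (β * n / α) * (Real.exp (α * (t - t₀)) - 1) := by
  intro t ht
  have hn' : (1 : ℝ) ≤ n := by exact_mod_cast hn
  have h := rpow_le_gronwallBound_of_deriv_le (by positivity)
    (div_le_one_of_le₀ hn' (by positivity)) (by positivity : 0 ≤ β * n ^ 2)
    (fun t _ => (hx t).hasDerivAt) (fun t _ => hxpos t) hineq t ht
  have hrate : 1 / (n : ℝ) * (α * n) = α := by field_simp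
  have hforcing : 1 / (n : ℝ) * (β * n ^ 2) = β * n := by field_simp
  rwa [hrate, hforcing, gronwallBound_of_K_ne_0 hα] at h
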